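/- arXiv:math/0601689 — 7 statements merged into one kernel-verified Lean document; each statement's English description precedes it below -/
import Mathlib

section
/- (Roberts's selection lemma.) Let s, t be positive integers and let I_1, ..., I_s be finite subsets of ℕ* = ℕ \ {0} with card I_ℓ ≥ st for 1 ≤ ℓ ≤ s. Then there is a permutation σ of {1,...,s} and finite sets J_ℓ ⊆ I_{σ(ℓ)} for 1 ≤ ℓ ≤ s with card J_ℓ = t and max J_ℓ ≤ min J_{ℓ+1} for all 1 ≤ ℓ < s. -/
namespace Maharam

private lemma roberts_aux : ∀ (s t : ℕ), 0 < t → ∀ (I : Fin s → Finset ℕ),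
    (∀ ℓ, s * t ≤ (I ℓ).card) →
    ∃ (σ : Equiv.Perm (Fin s)) (J : Fin s → Finset ℕ),
      (∀ ℓ, J ℓ ⊆ I (σ ℓ)) ∧ (∀ ℓ, (J ℓ).card = t) ∧
      (∀ ℓ₁ ℓ₂ : Fin s, (ℓ₁ : ℕ) + 1 = (ℓ₂ : ℕ) →
        ∀ a ∈ J ℓ₁, ∀ b ∈ J ℓ₂, a ≤ b) := by
  intro s
  induction s with
  | zero =>
    intro t ht I _
    exact ⟨Equiv.refl _, fun ℓ => ℓ.elim0, fun ℓ => ℓ.elim0, fun ℓ => ℓ.elim0,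
      fun ℓ => ℓ.elim0⟩
  | succ s ih =>
    intro t ht I hcard
    have hex : ∀ j : Fin (s + 1), ∃ c, t ≤ ((I j).filter (· ≤ c)).card := by
      intro j
      refine ⟨(I j).sup id, ?_⟩
      have hfe : (I j).filter (· ≤ (I j).sup id) = I j :=
        Finset.filter_true_of_mem (fun x hx => Finset.le_sup (f := id) hx)
      rw [hfe]
      have := hcard j
      nlinarith
    set ν : Fin (s + 1) → ℕ := fun j => Nat.find (hex j) with hν
    obtain ⟨k, -, hk⟩ := Finset.exists_min_image Finset.univ ν
      ⟨0, Finset.mem_univ 0⟩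
    set μ := ν k with hμ
    have hμk : t ≤ ((I k).filter (· ≤ μ)).card := Nat.find_spec (hex k)
    obtain ⟨J₀, hJ₀sub, hJ₀card⟩ := Finset.exists_subset_card_eq hμk
    have hsmall : ∀ j, ((I j).filter (· < μ)).card < t := by
      intro j
      by_contra h
      push_neg at h
      have hμ0 : 0 < μ := by
        rcases Nat.eq_zero_or_pos μ with h0 | h0
        · rw [h0] at h
          simp only [Nat.not_lt_zero, Finset.filter_false, Finset.card_empty] at h
          omega
        · exact h0
      have hle : ν j ≤ μ - 1 := by
        apply Nat.find_le
        refine le_trans h (Finset.card_le_card ?_)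
        intro x hx
        simp only [Finset.mem_filter] at hx ⊢
        exact ⟨hx.1, Nat.le_sub_one_of_lt hx.2⟩
      have := hk j (Finset.mem_univ j)
      omega
    set I' : Fin s → Finset ℕ := fun i => (I (k.succAbove i)).filter (μ ≤ ·)
      with hI'
    have hcard' : ∀ i, s * t ≤ (I' i).card := by
      intro i
      have h1 := Finset.card_filter_add_card_filter_not
        (s := I (k.succAbove i)) (p := (· < μ))
      have h2 : (I (k.succAbove i)).filter (fun x => ¬ x < μ) = I' i := by
        simp only [hI', not_lt]
      rw [h2] at h1
      have h3 := hsmall (k.succAbove i)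
      have h4 := hcard (k.succAbove i)
      nlinarith
    obtain ⟨σ', J', hsub', hcard'', hchain'⟩ := ih t ht I' hcard'
    set f : Fin (s + 1) → Fin (s + 1) :=
      Fin.cases k (fun i => k.succAbove (σ' i)) with hf
    have hfinj : Function.Injective f := by
      intro a b hab
      rcases Fin.eq_zero_or_eq_succ a with rfl | ⟨a', rfl⟩ <;>
        rcases Fin.eq_zero_or_eq_succ b with rfl | ⟨b', rfl⟩
      · rfl
      · simp only [hf, Fin.cases_zero, Fin.cases_succ] at hab
        exact absurd hab.symm (Fin.succAbove_ne k _)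
      · simp only [hf, Fin.cases_zero, Fin.cases_succ] at hab
        exact absurd hab (Fin.succAbove_ne k _)
      · simp only [hf, Fin.cases_succ] at hab
        have := Fin.succAbove_right_injective (p := k) hab
        rw [σ'.injective this]
    set σ : Equiv.Perm (Fin (s + 1)) := Equiv.ofBijective f
      ((Fintype.bijective_iff_injective_and_card f).mpr ⟨hfinj, rfl⟩) with hσ
    have hσeval : ∀ ℓ, σ ℓ = f ℓ := fun ℓ => rfl
    set J : Fin (s + 1) → Finset ℕ := Fin.cases J₀ J' with hJ
    refine ⟨σ, J, ?_, ?_, ?_⟩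
    · intro ℓ
      rcases Fin.eq_zero_or_eq_succ ℓ with rfl | ⟨i, rfl⟩
      · simp only [hJ, hσeval, hf, Fin.cases_zero]
        exact hJ₀sub.trans (Finset.filter_subset _ _)
      · simp only [hJ, hσeval, hf, Fin.cases_succ]
        exact (hsub' i).trans (Finset.filter_subset _ _)
    · intro ℓ
      rcases Fin.eq_zero_or_eq_succ ℓ with rfl | ⟨i, rfl⟩
      · simpa only [hJ, Fin.cases_zero] using hJ₀card
      · simpa only [hJ, Fin.cases_succ] using hcard'' i
    · intro ℓ₁ ℓ₂ h12 a ha b hb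
      rcases Fin.eq_zero_or_eq_succ ℓ₁ with rfl | ⟨a', rfl⟩
      · rcases Fin.eq_zero_or_eq_succ ℓ₂ with rfl | ⟨b', rfl⟩
        · simp at h12
        · simp only [hJ, Fin.cases_zero] at ha
          simp only [hJ, Fin.cases_succ] at hb
          have h1 : a ≤ μ := (Finset.mem_filter.mp (hJ₀sub ha)).2
          have h2 : μ ≤ b := (Finset.mem_filter.mp (hsub' b' hb)).2
          omega
      · rcases Fin.eq_zero_or_eq_succ ℓ₂ with rfl | ⟨b', rfl⟩
        · simp [Fin.val_succ] at h12
        · simp only [hJ, Fin.cases_succ] at ha hb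
          refine hchain' a' b' ?_ a ha b hb
          simp only [Fin.val_succ] at h12
          omega

/-- **Roberts's selection lemma.** Given positive integers `s, t` and finite
sets `I_1, …, I_s ⊆ ℕ* = ℕ \ {0}` with `card I_ℓ ≥ s·t`, one can relabel the
`I_ℓ` by a permutation `σ` and find `J_ℓ ⊆ I_{σ(ℓ)}` with `card J_ℓ = t` and
`J_1 ≺ J_2 ≺ ⋯ ≺ J_s`, i.e. `max J_ℓ ≤ min J_{ℓ+1}` for `ℓ < s`. -/
theorem roberts_selection (s t : ℕ) (hs : 0 < s) (ht : 0 < t)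
    (I : Fin s → Finset ℕ) (hpos : ∀ ℓ, ∀ i ∈ I ℓ, 0 < i)
    (hcard : ∀ ℓ, s * t ≤ (I ℓ).card) :
    ∃ (σ : Equiv.Perm (Fin s)) (J : Fin s → Finset ℕ),
      (∀ ℓ, J ℓ ⊆ I (σ ℓ)) ∧ (∀ ℓ, (J ℓ).card = t) ∧
      (∀ ℓ₁ ℓ₂ : Fin s, (ℓ₁ : ℕ) + 1 = (ℓ₂ : ℕ) →
        ∀ a ∈ J ℓ₁, ∀ b ∈ J ℓ₂, a ≤ b) := by
  exact roberts_aux s t ht I hcard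

end Maharam
end

section
/- Let q ≥ 1 and let X_1, ..., X_q ⊆ T be such that for each ℓ ≤ q the set X_ℓ is I_ℓ-thin for some finite set I_ℓ ⊆ ℕ* with card I_ℓ ≥ 3q. Then for every n ≥ 1 and every integer τ ≤ 2^n, the set S_{n,τ}^c = {z ∈ T : z_n = τ} is not contained in ⋃_{ℓ ≤ q} X_ℓ. -/
open Filter Topology

namespace Maharam

/-- The space `T = ∏_{n ≥ 1} {1, …, 2^n}`; the factor of rank `n` is encoded
as `Fin (2 ^ n)`. -/
abbrev T : Type := ∀ n : ℕ+, Fin (2 ^ (n : ℕ))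

/-- `X` belongs to the algebra `B_n` generated by the coordinates of rank `≤ n`,
i.e. `X` depends only on the coordinates of rank `≤ n`. -/
def MemBn (n : ℕ) (X : Set T) : Prop :=
  ∀ z z' : T, (∀ i : ℕ+, (i : ℕ) ≤ n → z i = z' i) → z ∈ X → z' ∈ X

/-- The algebra `B = ⋃_n B_n` of clopen subsets of `T`. -/
def MemB (X : Set T) : Prop := ∃ n : ℕ, MemBn n X

/-- The atom of rank `m` whose first `m` coordinates are prescribed by `τ`. -/
def atom (m : ℕ) (τ : ∀ i : ℕ+, Fin (2 ^ (i : ℕ))) : Set T :=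
  {z | ∀ i : ℕ+, (i : ℕ) ≤ m → z i = τ i}

/-- `A` is an atom of the algebra `B_m`. -/
def IsAtomOfRank (m : ℕ) (A : Set T) : Prop :=
  ∃ τ : ∀ i : ℕ+, Fin (2 ^ (i : ℕ)), A = atom m τ

/-- `S_{n,τ} = {z ∈ T : z_n ≠ τ}`. -/
def Sset (n : ℕ+) (τ : Fin (2 ^ (n : ℕ))) : Set T := {z | z n ≠ τ}

/-- `X` is `(m,n)`-thin: every atom of rank `m` contains an atom of rank `n`
disjoint from `X`. -/
def MNThin (m n : ℕ) (X : Set T) : Prop :=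
  ∀ A : Set T, IsAtomOfRank m A →
    ∃ A' : Set T, IsAtomOfRank n A' ∧ A' ⊆ A ∧ A' ∩ X = ∅

/-- `X` is `I`-thin: `(m,n)`-thin whenever `m < n` both belong to `I`. -/
def IThin (I : Finset ℕ+) (X : Set T) : Prop :=
  ∀ m ∈ I, ∀ n ∈ I, (m : ℕ) < (n : ℕ) → MNThin (m : ℕ) (n : ℕ) X

private lemma third_facts (F : Finset ℕ+) (hF : 3 ≤ F.card) :
    ∃ a b : ℕ+, a ∈ F ∧ b ∈ F ∧ ((F.sort (·≤·)).getD 2 1) ∈ F ∧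
      a < b ∧ b < (F.sort (·≤·)).getD 2 1 ∧
      (F.filter (fun x => x < (F.sort (·≤·)).getD 2 1)).card ≤ 2 := by
  classical
  set l := F.sort (·≤·) with hl
  have hlen : l.length = F.card := Finset.length_sort _
  have h0 : 0 < l.length := by omega
  have h1 : 1 < l.length := by omega
  have h2 : 2 < l.length := by omega
  have hsort : l.Pairwise (· < ·) := (Finset.sortedLT_sort F).pairwise
  have hmono : ∀ i j : Fin l.length, i < j → l.get i < l.get j := by
    intro i j hij
    exact List.pairwise_iff_get.mp hsort i j hij
  have hgetD : l.getD 2 1 = l.get ⟨2, h2⟩ := List.getD_eq_get l 1 ⟨2, h2⟩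
  set a := l.get ⟨0, h0⟩
  set b := l.get ⟨1, h1⟩
  set c := l.get ⟨2, h2⟩
  have hmem : ∀ i : Fin l.length, l.get i ∈ F := by
    intro i
    exact (Finset.mem_sort _).mp (List.get_mem l i)
  refine ⟨a, b, hmem _, hmem _, by rw [hgetD]; exact hmem _, ?_, ?_, ?_⟩
  · exact hmono _ _ (by simp)
  · rw [hgetD]; exact hmono _ _ (by simp [Fin.lt_def])
  · rw [hgetD]
    have hsub : F.filter (fun x => x < c) ⊆ {a, b} := by
      intro x hx
      rw [Finset.mem_filter] at hx
      obtain ⟨hxF, hxc⟩ := hx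
      have hxl : x ∈ l := (Finset.mem_sort _).mpr hxF
      obtain ⟨j, hj⟩ := List.mem_iff_get.mp hxl
      have hj2 : (j : ℕ) < 2 := by
        by_contra hge
        push_neg at hge
        rcases eq_or_lt_of_le hge with h | h
        · have hje : j = ⟨2, h2⟩ := Fin.ext (show (j:ℕ) = 2 by omega)
          rw [hje] at hj
          rw [← hj] at hxc; exact lt_irrefl _ hxc
        · have := hmono ⟨2, h2⟩ j (by simpa [Fin.lt_def])
          rw [hj] at this
          exact absurd hxc (not_lt.mpr this.le)
      simp only [Finset.mem_insert, Finset.mem_singleton]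
      interval_cases hji : (j : ℕ)
      · have hje : j = ⟨0, h0⟩ := Fin.ext (show (j:ℕ) = 0 by omega)
        rw [hje] at hj; left; exact hj.symm
      · have hje : j = ⟨1, h1⟩ := Fin.ext (show (j:ℕ) = 1 by omega)
        rw [hje] at hj; right; exact hj.symm
    calc (F.filter (fun x => x < c)).card ≤ ({a, b} : Finset ℕ+).card := Finset.card_le_card hsub
      _ ≤ 2 := (Finset.card_insert_le _ _).trans (by simp)


private lemma exists_avoid (q : ℕ) (X : Fin q → Set T) (I : Fin q → Finset ℕ+)
    (hthin : ∀ ℓ, IThin (I ℓ) (X ℓ)) (n : ℕ+) (τ : Fin (2 ^ (n : ℕ))) :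
    ∀ (k : ℕ) (s : Finset (Fin q)), s.card = k →
    ∀ (r : ℕ) (τ₀ : ∀ i : ℕ+, Fin (2 ^ (i : ℕ))),
      ((n : ℕ) ≤ r → τ₀ n = τ) →
      (∀ ℓ ∈ s, 3 * k ≤ ((I ℓ).filter (fun x : ℕ+ => r ≤ (x : ℕ))).card) →
      ∃ z : T, z ∈ atom r τ₀ ∧ z n = τ ∧ ∀ ℓ ∈ s, z ∉ X ℓ := by
  classical
  intro k
  induction k with
  | zero =>
    intro s hs r τ₀ hinv _
    have hse : s = ∅ := Finset.card_eq_zero.mp hs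
    refine ⟨Function.update τ₀ n τ, ?_, Function.update_self _ _ _, ?_⟩
    · intro i hi
      by_cases hin : i = n
      · subst hin
        rw [Function.update_self]
        exact (hinv hi).symm
      · rw [Function.update_of_ne hin]
    · intro ℓ hℓ
      rw [hse] at hℓ
      exact absurd hℓ (Finset.notMem_empty _)
  | succ k ih =>
    intro s hs r τ₀ hinv hcards
    have hsne : s.Nonempty := Finset.card_pos.mp (by omega)
    -- selection function: the third smallest element of I ℓ restricted to ≥ r
    set F : Fin q → Finset ℕ+ := fun ℓ => (I ℓ).filter (fun x : ℕ+ => r ≤ (x : ℕ)) with hF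
    set g : Fin q → ℕ+ := fun ℓ => ((F ℓ).sort (·≤·)).getD 2 1 with hg
    obtain ⟨ℓ₀, hℓ₀s, hmin⟩ := s.exists_min_image g hsne
    have hF3 : ∀ ℓ ∈ s, 3 ≤ (F ℓ).card := fun ℓ hℓ => le_trans (by omega) (hcards ℓ hℓ)
    obtain ⟨a, b, haF, hbF, hcF, hab, hbc, hfilt⟩ := third_facts (F ℓ₀) (hF3 ℓ₀ hℓ₀s)
    set c : ℕ+ := ((F ℓ₀).sort (·≤·)).getD 2 1 with hc
    have hcg : c = g ℓ₀ := rfl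
    -- facts about a b c
    have haI : a ∈ I ℓ₀ := (Finset.mem_filter.mp haF).1
    have hbI : b ∈ I ℓ₀ := (Finset.mem_filter.mp hbF).1
    have hcI : c ∈ I ℓ₀ := (Finset.mem_filter.mp hcF).1
    have har : r ≤ (a : ℕ) := (Finset.mem_filter.mp haF).2
    have hbr : r ≤ (b : ℕ) := (Finset.mem_filter.mp hbF).2
    -- choose a good pair (m, n') not straddling n
    obtain ⟨m, n', hmI, hn'I, hmn', hrm, hn'c, hQ⟩ :
        ∃ m n' : ℕ+, m ∈ I ℓ₀ ∧ n' ∈ I ℓ₀ ∧ (m : ℕ) < (n' : ℕ) ∧ r ≤ (m : ℕ) ∧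
          n' ≤ c ∧ ((n : ℕ) ≤ (m : ℕ) ∨ (n' : ℕ) < (n : ℕ)) := by
      by_cases h1 : (n : ℕ) ≤ (a : ℕ)
      · exact ⟨a, b, haI, hbI, (by exact_mod_cast hab), har, hbc.le, Or.inl h1⟩
      · by_cases h2 : (b : ℕ) < (n : ℕ)
        · exact ⟨a, b, haI, hbI, (by exact_mod_cast hab), har, hbc.le, Or.inr h2⟩
        · refine ⟨b, c, hbI, hcI, (by exact_mod_cast hbc), hbr, le_refl _, Or.inl (by omega)⟩
    -- apply thinness to the atom of rank m extending τ₀ and fixing coordinate n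
    set τ₁ : ∀ i : ℕ+, Fin (2 ^ (i : ℕ)) := Function.update τ₀ n τ with hτ₁
    obtain ⟨A', ⟨τ₂, rfl⟩, hsub, hdisj⟩ :=
      hthin ℓ₀ m hmI n' hn'I hmn' (atom (m : ℕ) τ₁) ⟨τ₁, rfl⟩
    have hτ₂self : τ₂ ∈ atom (n' : ℕ) τ₂ := fun i _ => rfl
    -- atom m τ₁ ⊆ atom r τ₀
    have hsub₁ : atom (m : ℕ) τ₁ ⊆ atom r τ₀ := by
      intro z hz i hi
      have hzi : z i = τ₁ i := hz i (le_trans hi hrm)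
      by_cases hin : i = n
      · subst hin
        rw [hzi, hτ₁, Function.update_self]
        exact (hinv hi).symm
      · rw [hzi, hτ₁, Function.update_of_ne hin]
    have hsub₀ : atom (n' : ℕ) τ₂ ⊆ atom r τ₀ := subset_trans hsub hsub₁
    -- new invariant
    have hinv' : (n : ℕ) ≤ (n' : ℕ) → τ₂ n = τ := by
      intro hnn'
      rcases hQ with hQ | hQ
      · have := hsub hτ₂self n hQ
        rw [this, hτ₁, Function.update_self]
      · omega
    -- card bounds for the remaining sets
    have hcards' : ∀ ℓ ∈ s.erase ℓ₀, 3 * k ≤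
        ((I ℓ).filter (fun x : ℕ+ => (n' : ℕ) ≤ (x : ℕ))).card := by
      intro ℓ hℓ
      have hℓs : ℓ ∈ s := Finset.mem_of_mem_erase hℓ
      obtain ⟨_, _, _, _, _, _, _, hfiltℓ⟩ := third_facts (F ℓ) (hF3 ℓ hℓs)
      have hgℓ : g ℓ₀ ≤ g ℓ := hmin ℓ hℓs
      -- filter (x < g ℓ₀) ⊆ filter (x < g ℓ)
      have hsubf : (F ℓ).filter (fun x => ¬ (c ≤ x)) ⊆
          (F ℓ).filter (fun x => x < ((F ℓ).sort (·≤·)).getD 2 1) := by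
        intro x hx
        rw [Finset.mem_filter] at hx ⊢
        refine ⟨hx.1, lt_of_lt_of_le (not_le.mp hx.2) (hcg ▸ hgℓ)⟩
      have hneg : ((F ℓ).filter (fun x => ¬ (c ≤ x))).card ≤ 2 :=
        le_trans (Finset.card_le_card hsubf) hfiltℓ
      have hsplit := Finset.card_filter_add_card_filter_not
        (s := F ℓ) (p := fun x => c ≤ x)
      have hFc : 3 * (k + 1) ≤ (F ℓ).card := hcards ℓ hℓs
      have hpos : 3 * k + 1 ≤ ((F ℓ).filter (fun x => c ≤ x)).card := by omega
      have hsubset : (F ℓ).filter (fun x => c ≤ x) ⊆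
          (I ℓ).filter (fun x : ℕ+ => (n' : ℕ) ≤ (x : ℕ)) := by
        intro x hx
        rw [Finset.mem_filter] at hx
        obtain ⟨hxF, hxc⟩ := hx
        rw [Finset.mem_filter]
        refine ⟨(Finset.mem_filter.mp hxF).1, ?_⟩
        have h1 : (c : ℕ) ≤ (x : ℕ) := by exact_mod_cast hxc
        have h2 : (n' : ℕ) ≤ (c : ℕ) := by exact_mod_cast hn'c
        omega
      have := Finset.card_le_card hsubset
      omega
    -- apply the induction hypothesis
    obtain ⟨z, hz₂, hzn, hznot⟩ := ih (s.erase ℓ₀)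
      (by rw [Finset.card_erase_of_mem hℓ₀s, hs]; omega)
      (n' : ℕ) τ₂ hinv' hcards'
    refine ⟨z, hsub₀ hz₂, hzn, ?_⟩
    intro ℓ hℓ
    by_cases hℓeq : ℓ = ℓ₀
    · subst hℓeq
      intro hzX
      have : z ∈ atom (n' : ℕ) τ₂ ∩ X ℓ := ⟨hz₂, hzX⟩
      rw [hdisj] at this
      exact this
    · exact hznot ℓ (Finset.mem_erase.mpr ⟨hℓeq, hℓ⟩)

/-- If each `X_ℓ` (`ℓ ≤ q`) is `I_ℓ`-thin with `card I_ℓ ≥ 3q`, then for every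
`n` and `τ ≤ 2^n` the set `S_{n,τ}ᶜ = {z : z_n = τ}` is not contained in
`⋃_{ℓ ≤ q} X_ℓ`. -/
theorem compl_S_not_subset_union_of_thin (q : ℕ) (hq : 1 ≤ q)
    (X : Fin q → Set T) (I : Fin q → Finset ℕ+)
    (hcard : ∀ ℓ, 3 * q ≤ (I ℓ).card)
    (hthin : ∀ ℓ, IThin (I ℓ) (X ℓ)) :
    ∀ (n : ℕ+) (τ : Fin (2 ^ (n : ℕ))),
      ¬ ((Sset n τ)ᶜ ⊆ ⋃ ℓ, X ℓ) := by
  intro n τ hsub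
  obtain ⟨z, _, hzn, hznot⟩ := exists_avoid q X I hthin n τ q Finset.univ
    (Finset.card_univ.trans (Fintype.card_fin q)) 0
    (fun i => ⟨0, Nat.two_pow_pos _⟩)
    (fun h => absurd h (by have := n.pos; omega))
    (by
      intro ℓ _
      have : (I ℓ).filter (fun x : ℕ+ => 0 ≤ (x : ℕ)) = I ℓ :=
        Finset.filter_true_of_mem (fun x _ => Nat.zero_le _)
      rw [this]; exact hcard ℓ)
  have hz : z ∈ (Sset n τ)ᶜ := by
    simp only [Sset, Set.mem_compl_iff, Set.mem_setOf_eq, not_not]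
    exact hzn
  obtain ⟨ℓ, hℓ⟩ := Set.mem_iUnion.mp (hsub hz)
  exact hznot ℓ (Finset.mem_univ ℓ) hℓ

end Maharam
end

section
/- Let (E_i)_{i≥1} be a pairwise disjoint sequence in B, and let (m(n))_{n≥1} be a strictly increasing sequence of positive integers such that E_n ∈ B_{m(n)} for each n and such that for all n and all k > n one has (E_k)_{m(n)} = (E_{n+1})_{m(n)}. Then for every n and every k > n+1, the set E_k is (m(n), m(n+1))-thin. -/
open Filter Topology

namespace Maharam

/-- `(X)_n`: the smallest `B_n`-measurable set containing `X` (the union of the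
atoms of rank `n` meeting `X`). -/
def projSet (n : ℕ) (X : Set T) : Set T :=
  {z | ∃ z' ∈ X, ∀ i : ℕ+, (i : ℕ) ≤ n → z i = z' i}

/-! Let `A` be an atom of rank `m(n)`. If `A` meets `E_{n+1}` at `z`, the atom of rank
`m(n+1)` through `z` lies in `A ∩ E_{n+1}`, hence misses `E_k`. Otherwise `A` misses
`(E_{n+1})_{m(n)} = (E_k)_{m(n)}`, so already `A` misses `E_k`. -/

theorem atom_subset_atom {m n : ℕ} (h : m ≤ n) (τ : T) : atom n τ ⊆ atom m τ :=
  fun _ hz i hi => hz i (hi.trans h)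

theorem atom_eq_of_mem {m : ℕ} {z τ : T} (hz : z ∈ atom m τ) : atom m z = atom m τ := by
  ext y
  exact forall₂_congr fun i hi => by rw [hz i hi]

theorem MemBn.atom_subset {n : ℕ} {X : Set T} (hX : MemBn n X) {z : T} (hz : z ∈ X) :
    atom n z ⊆ X :=
  fun y hy => hX z y (fun i hi => (hy i hi).symm) hz

theorem atom_inter_projSet_nonempty_iff {n : ℕ} (τ : T) (X : Set T) :
    (atom n τ ∩ projSet n X).Nonempty ↔ (atom n τ ∩ X).Nonempty := by
  constructor
  · rintro ⟨y, hyA, z, hzX, hyz⟩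
    exact ⟨z, fun i hi => (hyz i hi).symm.trans (hyA i hi), hzX⟩
  · rintro ⟨z, hzA, hzX⟩
    exact ⟨z, hzA, z, hzX, fun _ _ => rfl⟩

theorem mnThin_of_projSet_subset {m m' : ℕ} (hmm' : m ≤ m') {F Y : Set T}
    (hF : MemBn m' F) (hFY : F ∩ Y = ∅) (hproj : projSet m Y ⊆ projSet m F) :
    MNThin m m' Y := by
  rintro _ ⟨τ, rfl⟩
  by_cases hmeet : (atom m τ ∩ F).Nonempty
  · obtain ⟨z, hzA, hzF⟩ := hmeet
    refine ⟨atom m' z, ⟨z, rfl⟩, (atom_eq_of_mem hzA) ▸ atom_subset_atom hmm' z, ?_⟩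
    exact Set.subset_eq_empty (Set.inter_subset_inter_left Y (hF.atom_subset hzF)) hFY
  · refine ⟨atom m' τ, ⟨τ, rfl⟩, atom_subset_atom hmm' τ, ?_⟩
    have hAY : atom m τ ∩ Y = ∅ := by
      rw [← Set.not_nonempty_iff_eq_empty, ← atom_inter_projSet_nonempty_iff]
      rw [← atom_inter_projSet_nonempty_iff] at hmeet
      exact fun hY => hmeet (hY.mono (Set.inter_subset_inter_right _ hproj))
    exact Set.subset_eq_empty (Set.inter_subset_inter_left Y (atom_subset_atom hmm' τ)) hAY

theorem disjoint_tail_thin_general (E : ℕ → Set T) (m : ℕ → ℕ)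
    (hmono : StrictMono m)
    (hE : ∀ n, MemBn (m n) (E n))
    (hdisj : ∀ i j, i ≠ j → E i ∩ E j = ∅)
    (hproj : ∀ n k, n < k → projSet (m n) (E k) = projSet (m n) (E (n + 1))) :
    ∀ n k, n + 1 < k → MNThin (m n) (m (n + 1)) (E k) := fun n k hk =>
  mnThin_of_projSet_subset (hmono n.lt_succ_self).le (hE (n + 1))
    (hdisj (n + 1) k hk.ne) (hproj n k (by omega)).le

/-- If `(E_i)` is a disjoint sequence of `B` with `E_n ∈ B_{m(n)}` for a
strictly increasing sequence `(m(n))` of positive integers such that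
`(E_k)_{m(n)} = (E_{n+1})_{m(n)}` whenever `k > n`, then for all `n` and all
`k > n+1` the set `E_k` is `(m(n), m(n+1))`-thin. -/
theorem disjoint_tail_thin (E : ℕ → Set T) (m : ℕ → ℕ)
    (hmono : StrictMono m) (hmpos : ∀ n, 0 < m n)
    (hE : ∀ n, MemBn (m n) (E n))
    (hdisj : ∀ i j, i ≠ j → E i ∩ E j = ∅)
    (hproj : ∀ n k, n < k → projSet (m n) (E k) = projSet (m n) (E (n + 1))) :
    ∀ n k, n + 1 < k → MNThin (m n) (m (n + 1)) (E k) :=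
  disjoint_tail_thin_general E m hmono hE hdisj hproj

end Maharam
end

section
/- Assume the sequence N(k) satisfies N(k) ≥ 2^{k+6} (2^{k+5})^{1/α(k)} for all k ≥ 1. Then ψ(T) ≥ 2^5. -/
open Filter Topology

namespace Maharam

/-- The submeasure `φ_𝒞` associated with a class `𝒞` of weighted sets:
`φ_𝒞(B) = inf { ∑_{(X,w) ∈ F} w : F ⊆ 𝒞 finite, B ⊆ ⋃_{(X,w) ∈ F} X }`. -/
noncomputable def phiC (𝒞 : Set (Set T × ℝ)) (B : Set T) : ℝ :=
  sInf { r | ∃ F : Finset (Set T × ℝ), ↑F ⊆ 𝒞 ∧ B ⊆ ⋃ p ∈ F, p.1 ∧ r = ∑ p ∈ F, p.2 }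

/-- Projection of a class of marked weighted sets `(X, I, w)` to the class of
weighted sets `(X, w)`. -/
def forgetMarks (𝒞 : Set (Set T × Finset ℕ+ × ℝ)) : Set (Set T × ℝ) :=
  (fun q => (q.1, q.2.2)) '' 𝒞

/-- `α(k) = (k+5)^{-3}`. -/
noncomputable def alphaSeq (k : ℕ) : ℝ := (((k : ℝ) + 5) ^ 3)⁻¹

/-- The class `D_k` of marked weighted sets `(X, I, w)` with
`X = ⋂_{n ∈ I} S_{n,τ(n)}`, `card I ≤ N(k)` and `w = 2^{-k} (N(k)/card I)^{α(k)}`. -/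
noncomputable def Dk (N : ℕ → ℕ) (k : ℕ) : Set (Set T × Finset ℕ+ × ℝ) :=
  { q | ∃ (I : Finset ℕ+) (τ : ∀ i : ℕ+, Fin (2 ^ (i : ℕ))),
      I.Nonempty ∧ I.card ≤ N k ∧
      q = (⋂ i ∈ I, Sset i (τ i), I,
           (2 : ℝ) ^ (-(k : ℝ)) * ((N k : ℝ) / (I.card : ℝ)) ^ alphaSeq k) }

/-- `D = ⋃_{k ≥ 1} D_k`. -/
noncomputable def Dclass (N : ℕ → ℕ) : Set (Set T × Finset ℕ+ × ℝ) :=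
  { q | ∃ k : ℕ, 1 ≤ k ∧ q ∈ Dk N k }

/-- `ψ = φ_D`. -/
noncomputable def psi (N : ℕ → ℕ) : Set T → ℝ := phiC (forgetMarks (Dclass N))

/-- The growth condition `N(k) ≥ 2^{k+6} (2^{k+5})^{1/α(k)}` for all `k ≥ 1`. -/
def NCond (N : ℕ → ℕ) : Prop :=
  ∀ k : ℕ, 1 ≤ k → (N k : ℝ) ≥ 2 ^ (k + 6) * ((2 : ℝ) ^ (k + 5)) ^ (1 / alphaSeq k)

/-! ### Auxiliary lemmas -/

lemma alphaSeq_pos' (k : ℕ) : 0 < alphaSeq k := by unfold alphaSeq; positivity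

/-- If a weighted set of level `k` has weight less than `2^5`, its marker has
more than `2^{k+6}` elements. -/
lemma card_marker_large (k c Nk : ℕ) (hc : 1 ≤ c) (hcN : c ≤ Nk)
    (hN : (Nk : ℝ) ≥ 2 ^ (k + 6) * ((2 : ℝ) ^ (k + 5)) ^ (1 / alphaSeq k))
    (hw : (2:ℝ) ^ (-(k:ℝ)) * ((Nk:ℝ)/(c:ℝ)) ^ alphaSeq k < 2 ^ (5:ℕ)) :
    2 ^ (k + 6) < c := by
  have hα : 0 < alphaSeq k := alphaSeq_pos' k
  have hc0 : (0:ℝ) < (c:ℝ) := by exact_mod_cast hc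
  have hN0 : (0:ℝ) < (Nk:ℝ) := lt_of_lt_of_le hc0 (by exact_mod_cast hcN)
  set r : ℝ := (Nk:ℝ)/(c:ℝ) with hr
  have hr0 : 0 < r := div_pos hN0 hc0
  have h2k : (0:ℝ) < 2 ^ k := by positivity
  have hrp : (2:ℝ) ^ (-(k:ℝ)) = ((2:ℝ)^k)⁻¹ := by
    rw [Real.rpow_neg (by norm_num), Real.rpow_natCast]
  rw [hrp] at hw
  have h1 : r ^ alphaSeq k < 2 ^ (k + 5) := by
    rw [inv_mul_lt_iff₀ h2k] at hw
    calc r ^ alphaSeq k < 2^k * 2^(5:ℕ) := hw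
    _ = 2 ^ (k+5) := by ring
  set B : ℝ := ((2:ℝ) ^ (k + 5)) ^ (1 / alphaSeq k) with hB
  have hB0 : 0 < B := Real.rpow_pos_of_pos (by positivity) _
  have h2 : r < B := by
    have h3 : (r ^ alphaSeq k) ^ (1 / alphaSeq k) < B :=
      Real.rpow_lt_rpow (Real.rpow_nonneg hr0.le _) h1 (by positivity)
    rwa [one_div, Real.rpow_rpow_inv hr0.le hα.ne'] at h3
  have h4 : (Nk:ℝ) / B < (Nk:ℝ) / r := div_lt_div_of_pos_left hN0 hr0 h2
  have h5 : (Nk:ℝ) / r = c := by field_simp [hr]; rw [hr, div_mul_cancel₀ _ hc0.ne']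
  have h6 : (2:ℝ) ^ (k+6) ≤ (Nk:ℝ) / B := (le_div_iff₀ hB0).mpr hN
  have : (2:ℝ) ^ (k+6) < (c:ℝ) := by linarith [h4, h6, h5.symm ▸ h4]
  exact_mod_cast this

/-- Greedy construction of a system of distinct representatives. -/
lemma greedy_sdr {P : Type} (k : P → ℕ) (I : P → Finset ℕ+) :
    ∀ (n : ℕ) (F : Finset P), F.card = n →
    (∀ p ∈ F, (F.filter fun q => k q ≤ k p).card ≤ (I p).card) →
    ∃ f : P → ℕ+, Set.InjOn f ↑F ∧ ∀ p ∈ F, f p ∈ I p := by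
  classical
  intro n
  induction n with
  | zero =>
    intro F hF _
    rw [Finset.card_eq_zero] at hF
    subst hF
    exact ⟨fun _ => 1, by simp, by simp⟩
  | succ n ih =>
    intro F hF hyp
    have hFne : F.Nonempty := by
      rw [← Finset.card_pos, hF]; omega
    obtain ⟨p₀, hp₀, hmax⟩ := F.exists_max_image k hFne
    set F' := F.erase p₀ with hF'
    have hcard' : F'.card = n := by
      rw [hF', Finset.card_erase_of_mem hp₀, hF]; omega
    have hyp' : ∀ p ∈ F', (F'.filter fun q => k q ≤ k p).card ≤ (I p).card := by
      intro p hp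
      refine le_trans (Finset.card_le_card ?_) (hyp p (Finset.mem_of_mem_erase hp))
      exact Finset.filter_subset_filter _ (Finset.erase_subset _ _)
    obtain ⟨f', hinj', hmem'⟩ := ih F' hcard' hyp'
    have hIcard : n < (I p₀).card := by
      have h1 : (F.filter fun q => k q ≤ k p₀) = F := Finset.filter_true_of_mem hmax
      have := hyp p₀ hp₀
      rw [h1, hF] at this; omega
    have himage : (F'.image f').card < (I p₀).card := by
      calc (F'.image f').card ≤ F'.card := Finset.card_image_le
      _ = n := hcard'
      _ < (I p₀).card := hIcard
    have hne : ((I p₀) \ (F'.image f')).Nonempty := by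
      rw [Finset.sdiff_nonempty]
      intro hsub
      exact absurd (Finset.card_le_card hsub) (not_le.mpr himage)
    obtain ⟨x, hxmem⟩ := hne
    obtain ⟨hx, hxnot⟩ := Finset.mem_sdiff.mp hxmem
    refine ⟨Function.update f' p₀ x, ?_, ?_⟩
    · intro a ha b hb hab
      simp only [Finset.mem_coe] at ha hb
      by_cases hap : a = p₀ <;> by_cases hbp : b = p₀
      · rw [hap, hbp]
      · exfalso
        rw [hap, Function.update_self, Function.update_of_ne hbp] at hab
        exact hxnot (Finset.mem_image.mpr ⟨b, Finset.mem_erase.mpr ⟨hbp, hb⟩, hab.symm⟩)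
      · exfalso
        rw [hbp, Function.update_self, Function.update_of_ne hap] at hab
        exact hxnot (Finset.mem_image.mpr ⟨a, Finset.mem_erase.mpr ⟨hap, ha⟩, hab⟩)
      · rw [Function.update_of_ne hap, Function.update_of_ne hbp] at hab
        exact hinj' (Finset.mem_coe.mpr (Finset.mem_erase.mpr ⟨hap, ha⟩))
          (Finset.mem_coe.mpr (Finset.mem_erase.mpr ⟨hbp, hb⟩)) hab
    · intro p hp
      by_cases hpp : p = p₀
      · rw [hpp, Function.update_self]; exact hx
      · rw [Function.update_of_ne hpp]
        exact hmem' p (Finset.mem_erase.mpr ⟨hpp, hp⟩)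

lemma sum_two_pow_le (K : ℕ) : ∑ j ∈ Finset.range (K+1), 2^(j+5) ≤ 2^(K+6) := by
  induction K with
  | zero => simp
  | succ K ih =>
    rw [Finset.sum_range_succ]
    have : (2:ℕ)^(K+1+5) = 2^(K+6) := by ring
    rw [this]
    calc ∑ j ∈ Finset.range (K+1), 2^(j+5) + 2^(K+6) ≤ 2^(K+6) + 2^(K+6) := by omega
    _ = 2^(K+7) := by ring

/-- If `N(k) ≥ 2^{k+6} (2^{k+5})^{1/α(k)}` for all `k ≥ 1`, then `ψ(T) ≥ 2^5`. -/
theorem psi_univ_ge (N : ℕ → ℕ) (hN : NCond N) :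
    (2 : ℝ) ^ (5 : ℕ) ≤ psi N Set.univ := by
  classical
  have hzero : ∀ i : ℕ+, Fin (2 ^ (i:ℕ)) := fun i => ⟨0, Nat.pow_pos (by norm_num)⟩
  -- the defining set of the infimum
  set S := { r | ∃ F : Finset (Set T × ℝ), ↑F ⊆ forgetMarks (Dclass N) ∧
      Set.univ ⊆ ⋃ p ∈ F, p.1 ∧ r = ∑ p ∈ F, p.2 } with hS
  -- N 1 ≥ 1
  have hN1 : 1 ≤ N 1 := by
    have h := hN 1 le_rfl
    have hB0 : (0:ℝ) < ((2:ℝ) ^ (1 + 5)) ^ (1 / alphaSeq 1) :=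
      Real.rpow_pos_of_pos (by positivity) _
    have : (1:ℝ) ≤ (N 1 : ℝ) := by
      have h1 : (1:ℝ) ≤ ((2:ℝ) ^ (1 + 5)) ^ (1 / alphaSeq 1) :=
        Real.one_le_rpow (by norm_num) (one_div_pos.mpr (alphaSeq_pos' 1)).le
      nlinarith
    exact_mod_cast this
  -- S is nonempty: cover T by the two sets S_{1,0} and S_{1,1}
  have hSne : S.Nonempty := by
    set w₁ : ℝ := (2 : ℝ) ^ (-(1:ℕ) : ℝ) * ((N 1 : ℝ) / ((1:ℕ) : ℝ)) ^ alphaSeq 1 with hw₁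
    let τdef : Fin 2 → ∀ i : ℕ+, Fin (2 ^ (i:ℕ)) := fun b i =>
      ⟨(b : ℕ), lt_of_lt_of_le b.isLt (by
        calc (2:ℕ) = 2^1 := (pow_one 2).symm
        _ ≤ 2^(i:ℕ) := Nat.pow_le_pow_right (by norm_num) i.one_le)⟩
    have hmem : ∀ b : Fin 2, (Sset 1 ((τdef b) 1), w₁) ∈ forgetMarks (Dclass N) := by
      intro b
      refine ⟨(⋂ i ∈ ({1} : Finset ℕ+), Sset i ((τdef b) i), ({1} : Finset ℕ+), w₁), ?_, ?_⟩
      · exact ⟨1, le_rfl, ({1} : Finset ℕ+), τdef b, Finset.singleton_nonempty _, by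
          simpa using hN1, by simp [hw₁]⟩
      · simp
    refine ⟨∑ p ∈ ({(Sset 1 ((τdef 0) 1), w₁), (Sset 1 ((τdef 1) 1), w₁)} :
        Finset (Set T × ℝ)), p.2, ?_⟩
    refine ⟨{(Sset 1 ((τdef 0) 1), w₁), (Sset 1 ((τdef 1) 1), w₁)}, ?_, ?_, rfl⟩
    · intro p hp
      simp only [Finset.coe_insert, Finset.coe_singleton, Set.mem_insert_iff,
        Set.mem_singleton_iff] at hp
      rcases hp with h | h <;> (subst h; exact hmem _)
    · intro z _
      simp only [Set.mem_iUnion, Finset.mem_insert, Finset.mem_singleton]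
      by_cases h0 : z 1 = (τdef 0) 1
      · refine ⟨(Sset 1 ((τdef 1) 1), w₁), Or.inr rfl, ?_⟩
        intro hz
        have heq : ((τdef 0) 1 : Fin (2 ^ ((1:ℕ+):ℕ))) = (τdef 1) 1 := h0 ▸ hz
        have hval := congrArg Fin.val heq
        have h01 : ((τdef 0) 1 : Fin (2 ^ ((1:ℕ+):ℕ))).val = 0 := rfl
        have h11 : ((τdef 1) 1 : Fin (2 ^ ((1:ℕ+):ℕ))).val = 1 := rfl
        rw [h01, h11] at hval
        exact absurd hval (by norm_num)
      · exact ⟨(Sset 1 ((τdef 0) 1), w₁), Or.inl rfl, h0⟩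
  -- main bound
  rw [psi, phiC]
  apply le_csInf hSne
  rintro r ⟨F, hsub, hcov, rfl⟩
  by_contra hcon
  push_neg at hcon
  -- extract the data of each weighted set
  have key : ∀ p : Set T × ℝ, ∃ (k : ℕ) (I : Finset ℕ+) (τ : ∀ i : ℕ+, Fin (2 ^ (i:ℕ))),
      p ∈ F → (1 ≤ k ∧ I.Nonempty ∧ I.card ≤ N k ∧ p.1 = ⋂ i ∈ I, Sset i (τ i) ∧
        p.2 = (2 : ℝ) ^ (-(k : ℝ)) * ((N k : ℝ) / (I.card : ℝ)) ^ alphaSeq k) := by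
    intro p
    by_cases hp : p ∈ F
    · obtain ⟨q, hq, hqp⟩ := hsub hp
      obtain ⟨k, hk1, I, τ, hne, hcard, hq'⟩ := hq
      subst hq'
      refine ⟨k, I, τ, fun _ => ⟨hk1, hne, hcard, ?_, ?_⟩⟩
      · rw [← hqp]
      · rw [← hqp]
    · exact ⟨1, {1}, hzero, fun h => absurd h hp⟩
  choose kf If τf hprop using key
  have hk1 : ∀ p ∈ F, 1 ≤ kf p := fun p hp => (hprop p hp).1
  have hIne : ∀ p ∈ F, (If p).Nonempty := fun p hp => (hprop p hp).2.1
  have hIcard : ∀ p ∈ F, (If p).card ≤ N (kf p) := fun p hp => (hprop p hp).2.2.1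
  have hXeq : ∀ p ∈ F, p.1 = ⋂ i ∈ If p, Sset i (τf p i) := fun p hp => (hprop p hp).2.2.2.1
  have hweq : ∀ p ∈ F,
      p.2 = (2 : ℝ) ^ (-(kf p : ℝ)) * ((N (kf p) : ℝ) / ((If p).card : ℝ)) ^ alphaSeq (kf p) :=
    fun p hp => (hprop p hp).2.2.2.2
  -- every weight is positive
  have hwpos : ∀ p ∈ F, (0:ℝ) < p.2 := by
    intro p hp
    rw [hweq p hp]
    have hc0 : (0:ℝ) < ((If p).card : ℝ) := by
      exact_mod_cast Finset.card_pos.mpr (hIne p hp)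
    have hN0 : (0:ℝ) < (N (kf p) : ℝ) :=
      lt_of_lt_of_le hc0 (by exact_mod_cast hIcard p hp)
    have := Real.rpow_pos_of_pos (div_pos hN0 hc0) (alphaSeq (kf p))
    have h2 : (0:ℝ) < (2:ℝ) ^ (-(kf p : ℝ)) := Real.rpow_pos_of_pos (by norm_num) _
    positivity
  -- every individual weight is < 2^5
  have hwlt : ∀ p ∈ F, p.2 < 2 ^ (5:ℕ) := by
    intro p hp
    have h1 : p.2 ≤ ∑ q ∈ F, q.2 :=
      Finset.single_le_sum (fun q hq => (hwpos q hq).le) hp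
    linarith
  -- hence every marker is large
  have hlarge : ∀ p ∈ F, 2 ^ (kf p + 6) < (If p).card := by
    intro p hp
    refine card_marker_large (kf p) (If p).card (N (kf p))
      (Finset.card_pos.mpr (hIne p hp)) (hIcard p hp) (hN (kf p) (hk1 p hp)) ?_
    rw [← hweq p hp]
    exact hwlt p hp
  -- level counts
  have hcount : ∀ j : ℕ, (F.filter fun q => kf q = j).card ≤ 2 ^ (j + 5) := by
    intro j
    by_contra hc
    push_neg at hc
    have hsub' : (F.filter fun q => kf q = j) ⊆ F := Finset.filter_subset _ _
    have h1 : ((F.filter fun q => kf q = j).card : ℝ) * (2:ℝ) ^ (-(j:ℝ)) ≤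
        ∑ q ∈ F.filter (fun q => kf q = j), q.2 := by
      rw [← nsmul_eq_mul]
      apply Finset.card_nsmul_le_sum
      intro q hq
      obtain ⟨hqF, hqj⟩ := Finset.mem_filter.mp hq
      rw [← hqj, hweq q hqF]
      have hc0 : (0:ℝ) < ((If q).card : ℝ) := by
        exact_mod_cast Finset.card_pos.mpr (hIne q hqF)
      have hr1 : (1:ℝ) ≤ (N (kf q) : ℝ) / ((If q).card : ℝ) := by
        rw [one_le_div hc0]
        exact_mod_cast hIcard q hqF
      have : (1:ℝ) ≤ ((N (kf q) : ℝ) / ((If q).card : ℝ)) ^ alphaSeq (kf q) :=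
        Real.one_le_rpow hr1 (alphaSeq_pos' _).le
      have h2 : (0:ℝ) < (2:ℝ) ^ (-(kf q:ℝ)) := Real.rpow_pos_of_pos (by norm_num) _
      nlinarith
    have h2 : ∑ q ∈ F.filter (fun q => kf q = j), q.2 ≤ ∑ q ∈ F, q.2 :=
      Finset.sum_le_sum_of_subset_of_nonneg hsub' (fun q hq _ => (hwpos q hq).le)
    have h3 : ((F.filter fun q => kf q = j).card : ℝ) * (2:ℝ) ^ (-(j:ℝ)) < 2 ^ (5:ℕ) := by
      linarith
    have hrp : (2:ℝ) ^ (-(j:ℝ)) = ((2:ℝ)^j)⁻¹ := by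
      rw [Real.rpow_neg (by norm_num), Real.rpow_natCast]
    rw [hrp] at h3
    have h2j : (0:ℝ) < 2 ^ j := by positivity
    have h4 : ((F.filter fun q => kf q = j).card : ℝ) < 2 ^ (5:ℕ) * 2 ^ j := by
      rw [mul_inv_lt_iff₀ h2j] at h3
      linarith
    have h5 : ((F.filter fun q => kf q = j).card : ℝ) < 2 ^ (j + 5) := by
      calc ((F.filter fun q => kf q = j).card : ℝ) < 2 ^ (5:ℕ) * 2 ^ j := h4
      _ = 2 ^ (j + 5) := by ring
    have h6 : (F.filter fun q => kf q = j).card < 2 ^ (j + 5) := by exact_mod_cast h5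
    omega
  -- count of sets of level ≤ K
  have hfiltercard : ∀ p ∈ F, (F.filter fun q => kf q ≤ kf p).card ≤ (If p).card := by
    intro p hp
    set K := kf p with hK
    have hsubB : (F.filter fun q => kf q ≤ K) ⊆
        (Finset.range (K+1)).biUnion (fun j => F.filter fun q => kf q = j) := by
      intro q hq
      obtain ⟨hqF, hqK⟩ := Finset.mem_filter.mp hq
      exact Finset.mem_biUnion.mpr ⟨kf q, Finset.mem_range.mpr (by omega),
        Finset.mem_filter.mpr ⟨hqF, rfl⟩⟩
    calc (F.filter fun q => kf q ≤ K).card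
        ≤ ((Finset.range (K+1)).biUnion (fun j => F.filter fun q => kf q = j)).card :=
          Finset.card_le_card hsubB
      _ ≤ ∑ j ∈ Finset.range (K+1), (F.filter fun q => kf q = j).card :=
          Finset.card_biUnion_le
      _ ≤ ∑ j ∈ Finset.range (K+1), 2 ^ (j + 5) :=
          Finset.sum_le_sum (fun j _ => hcount j)
      _ ≤ 2 ^ (K + 6) := sum_two_pow_le K
      _ ≤ (If p).card := (hlarge p hp).le
  -- build the system of distinct representatives
  obtain ⟨f, hfinj, hfmem⟩ := greedy_sdr kf If F.card F rfl hfiltercard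
  -- build the uncovered point
  set z : T := fun n => if h : ∃ p ∈ F, f p = n then τf h.choose n else hzero n with hz
  have hzval : ∀ p ∈ F, z (f p) = τf p (f p) := by
    intro p hp
    have hex : ∃ q ∈ F, f q = f p := ⟨p, hp, rfl⟩
    have hq := hex.choose_spec
    have : hex.choose = p := hfinj hq.1 hp hq.2
    rw [hz]
    simp only [dif_pos hex]
    rw [this]
  -- contradiction with the covering
  obtain ⟨_, ⟨p, rfl⟩, hzp⟩ := hcov (Set.mem_univ z)
  simp only [Set.mem_iUnion] at hzp
  obtain ⟨hpF, hzp⟩ := hzp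
  rw [hXeq p hpF] at hzp
  have hzin : z ∈ Sset (f p) (τf p (f p)) := by
    have := Set.mem_iInter₂.mp hzp (f p) (hfmem p hpF)
    exact this
  exact hzin (hzval p hpF)

end Maharam
end

section
/- Assume the sequence N(k) satisfies N(k) ≥ 2^{k+6} (2^{k+5})^{1/α(k)} for all k ≥ 1. Then ψ is pathological: every finitely additive measure μ on B that is absolutely continuous with respect to ψ is identically zero. -/
open Filter Topology

namespace Maharam

/-- `ν` is a submeasure on the algebra of sets `𝒜`. -/
def IsSubmeasureOn (𝒜 : Set T → Prop) (ν : Set T → ℝ) : Prop :=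
  ν ∅ = 0 ∧ (∀ A, 𝒜 A → 0 ≤ ν A) ∧
    (∀ A B, 𝒜 A → 𝒜 B → A ⊆ B → ν A ≤ ν B) ∧
    (∀ A B, 𝒜 A → 𝒜 B → ν (A ∪ B) ≤ ν A + ν B)

/-- `μ` is a finitely additive measure on the algebra of sets `𝒜`. -/
def IsMeasureOn (𝒜 : Set T → Prop) (μ : Set T → ℝ) : Prop :=
  IsSubmeasureOn 𝒜 μ ∧ ∀ A B, 𝒜 A → 𝒜 B → A ∩ B = ∅ → μ (A ∪ B) = μ A + μ B

/-- `ν` is exhaustive: `ν (E n) → 0` along every disjoint sequence of `𝒜`. -/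
def ExhaustiveOn (𝒜 : Set T → Prop) (ν : Set T → ℝ) : Prop :=
  ∀ E : ℕ → Set T, (∀ n, 𝒜 (E n)) → (∀ i j, i ≠ j → E i ∩ E j = ∅) →
    Tendsto (fun n => ν (E n)) atTop (𝓝 0)

/-- `ν` is uniformly exhaustive. -/
def UniformlyExhaustiveOn (𝒜 : Set T → Prop) (ν : Set T → ℝ) : Prop :=
  ∀ ε : ℝ, 0 < ε → ∃ n : ℕ, 0 < n ∧
    ∀ E : Fin n → Set T, (∀ i, 𝒜 (E i)) → (∀ i j, i ≠ j → E i ∩ E j = ∅) →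
      ∃ i, ν (E i) ≤ ε

/-- `ν` is `ε`-exhaustive: `limsup_n ν (E n) ≤ ε` for every disjoint sequence of `𝒜`. -/
def EpsExhaustiveOn (𝒜 : Set T → Prop) (ν : Set T → ℝ) (ε : ℝ) : Prop :=
  ∀ E : ℕ → Set T, (∀ n, 𝒜 (E n)) → (∀ i j, i ≠ j → E i ∩ E j = ∅) →
    ∀ δ : ℝ, 0 < δ → ∃ N : ℕ, ∀ n ≥ N, ν (E n) ≤ ε + δ

/-- `ν₁` is absolutely continuous with respect to `ν₂` on `𝒜`. -/
def AbsContOn (𝒜 : Set T → Prop) (ν₁ ν₂ : Set T → ℝ) : Prop :=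
  ∀ ε : ℝ, 0 < ε → ∃ α : ℝ, 0 < α ∧ ∀ A, 𝒜 A → ν₂ A ≤ α → ν₁ A ≤ ε

/-! ### Auxiliary material -/

/-- The cylinder `{z : z_n = t}`. -/
def cell (n : ℕ+) (t : Fin (2 ^ (n : ℕ))) : Set T := {z | z n = t}

lemma memBn_mono {n m : ℕ} (h : n ≤ m) {X : Set T} (hX : MemBn n X) : MemBn m X :=
  fun z z' hzz hz => hX z z' (fun i hi => hzz i (hi.trans h)) hz

lemma memB_univ : MemB (Set.univ : Set T) := ⟨0, fun _ _ _ _ => trivial⟩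

lemma memB_empty : MemB (∅ : Set T) := ⟨0, fun _ _ _ h => h⟩

lemma memB_cell (n : ℕ+) (t : Fin (2 ^ (n : ℕ))) : MemB (cell n t) := by
  refine ⟨n, fun z z' h hz => ?_⟩
  have hzz : z n = z' n := h n le_rfl
  show z' n = t
  rw [← hzz]; exact hz

lemma memB_union {X Y : Set T} (hX : MemB X) (hY : MemB Y) : MemB (X ∪ Y) := by
  obtain ⟨n, hn⟩ := hX; obtain ⟨m, hm⟩ := hY
  refine ⟨max n m, fun z z' h hz => ?_⟩
  rcases hz with hz | hz
  · exact Or.inl (memBn_mono (le_max_left n m) hn z z' h hz)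
  · exact Or.inr (memBn_mono (le_max_right n m) hm z z' h hz)

lemma memB_compl {X : Set T} (hX : MemB X) : MemB Xᶜ := by
  obtain ⟨n, hn⟩ := hX
  refine ⟨n, fun z z' h hz hz' => ?_⟩
  exact hz (hn z' z (fun i hi => (h i hi).symm) hz')

lemma memB_biUnion {ι : Type*} [DecidableEq ι] (I : Finset ι) (E : ι → Set T)
    (hE : ∀ i ∈ I, MemB (E i)) : MemB (⋃ i ∈ I, E i) := by
  classical
  induction I using Finset.induction_on with
  | empty => simpa using memB_empty
  | @insert a s hnotmem ih =>
    rw [Finset.set_biUnion_insert]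
    exact memB_union (hE a (Finset.mem_insert_self a s))
      (ih (fun i hi => hE i (Finset.mem_insert_of_mem hi)))

lemma meas_biUnion_le {μ : Set T → ℝ} (hμ : IsMeasureOn MemB μ) {ι : Type*} [DecidableEq ι] (I : Finset ι) (E : ι → Set T)
    (hE : ∀ i ∈ I, MemB (E i)) : μ (⋃ i ∈ I, E i) ≤ ∑ i ∈ I, μ (E i) := by
  classical
  induction I using Finset.induction_on with
  | empty => simp [hμ.1.1]
  | @insert a s hnotmem ih =>
    rw [Finset.set_biUnion_insert, Finset.sum_insert hnotmem]
    calc μ (E a ∪ ⋃ i ∈ s, E i) ≤ μ (E a) + μ (⋃ i ∈ s, E i) :=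
          hμ.1.2.2.2 _ _ (hE a (Finset.mem_insert_self a s))
            (memB_biUnion s E (fun i hi => hE i (Finset.mem_insert_of_mem hi)))
      _ ≤ μ (E a) + ∑ i ∈ s, μ (E i) := by
          have := ih (fun i hi => hE i (Finset.mem_insert_of_mem hi)); linarith

lemma meas_biUnion_eq {μ : Set T → ℝ} (hμ : IsMeasureOn MemB μ) {ι : Type*} [DecidableEq ι] (I : Finset ι) (E : ι → Set T)
    (hE : ∀ i ∈ I, MemB (E i))
    (hd : ∀ i ∈ I, ∀ j ∈ I, i ≠ j → E i ∩ E j = ∅) :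
    μ (⋃ i ∈ I, E i) = ∑ i ∈ I, μ (E i) := by
  classical
  induction I using Finset.induction_on with
  | empty => simp [hμ.1.1]
  | @insert a s hnotmem ih =>
    rw [Finset.set_biUnion_insert, Finset.sum_insert hnotmem]
    have hdisj : E a ∩ ⋃ i ∈ s, E i = ∅ := by
      ext z; simp only [Set.mem_inter_iff, Set.mem_iUnion, Set.mem_empty_iff_false,
        iff_false, not_and, not_exists]
      intro hza i hi hzi
      have hne : a ≠ i := by rintro rfl; exact hnotmem hi
      have := hd a (Finset.mem_insert_self a s) i (Finset.mem_insert_of_mem hi) hne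
      exact absurd (Set.mem_inter hza hzi) (by simp [this])
    rw [hμ.2 _ _ (hE a (Finset.mem_insert_self a s))
        (memB_biUnion s E (fun i hi => hE i (Finset.mem_insert_of_mem hi))) hdisj,
      ih (fun i hi => hE i (Finset.mem_insert_of_mem hi))
        (fun i hi j hj => hd i (Finset.mem_insert_of_mem hi) j (Finset.mem_insert_of_mem hj))]

/-- In each rank there is a cylinder of small measure. -/
lemma exists_small_cell {μ : Set T → ℝ} (hμ : IsMeasureOn MemB μ) (n : ℕ+) :
    ∃ t : Fin (2 ^ (n : ℕ)), μ (cell n t) ≤ μ Set.univ / 2 ^ (n : ℕ) := by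
  classical
  by_contra hcon
  push_neg at hcon
  have hcover : (⋃ t ∈ (Finset.univ : Finset (Fin (2 ^ (n : ℕ)))), cell n t) = Set.univ := by
    ext z; simp only [Set.mem_iUnion, Set.mem_univ, iff_true]
    exact ⟨z n, Finset.mem_univ _, rfl⟩
  have hdisj : ∀ t ∈ (Finset.univ : Finset (Fin (2 ^ (n : ℕ)))),
      ∀ s ∈ (Finset.univ : Finset (Fin (2 ^ (n : ℕ)))), t ≠ s → cell n t ∩ cell n s = ∅ := by
    intro t _ s _ hts
    ext z; simp only [Set.mem_inter_iff, Set.mem_empty_iff_false, iff_false, not_and]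
    intro h1 h2
    exact hts (h1 ▸ h2 ▸ rfl)
  have heq := meas_biUnion_eq hμ (Finset.univ : Finset (Fin (2 ^ (n : ℕ)))) (cell n)
    (fun t _ => memB_cell n t) hdisj
  rw [hcover] at heq
  have hpos : (0 : ℕ) < 2 ^ (n : ℕ) := Nat.pow_pos (by norm_num)
  haveI : NeZero (2 ^ (n : ℕ)) := ⟨hpos.ne'⟩
  have hlt : ∑ t : Fin (2 ^ (n : ℕ)), μ Set.univ / 2 ^ (n : ℕ)
      < ∑ t : Fin (2 ^ (n : ℕ)), μ (cell n t) :=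
    Finset.sum_lt_sum_of_nonempty Finset.univ_nonempty (fun t _ => hcon t)
  rw [Finset.sum_const, Finset.card_univ, Fintype.card_fin, nsmul_eq_mul] at hlt
  push_cast at hlt
  have h2n : (0 : ℝ) < (2 : ℝ) ^ (n : ℕ) := by positivity
  have heq2 : (2 : ℝ) ^ (n : ℕ) * (μ Set.univ / 2 ^ (n : ℕ)) = μ Set.univ := by
    field_simp
  rw [heq2, ← heq] at hlt
  exact lt_irrefl _ hlt

lemma weight_nonneg {N : ℕ → ℕ} {p : Set T × ℝ} (hp : p ∈ forgetMarks (Dclass N)) :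
    0 ≤ p.2 := by
  obtain ⟨q, hq, rfl⟩ := hp
  obtain ⟨k, _, I, τ, _, _, hq⟩ := hq
  rw [hq]
  have h1 : (0 : ℝ) ≤ (2 : ℝ) ^ (-(k : ℝ)) := Real.rpow_nonneg (by norm_num) _
  have h2 : (0 : ℝ) ≤ ((N k : ℝ) / (I.card : ℝ)) ^ alphaSeq k :=
    Real.rpow_nonneg (div_nonneg (Nat.cast_nonneg _) (Nat.cast_nonneg _)) _
  exact mul_nonneg h1 h2

lemma psi_le_of_card_eq (N : ℕ → ℕ) (k : ℕ) (hk : 1 ≤ k) (hNk : 1 ≤ N k)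
    (I : Finset ℕ+) (hI : I.card = N k) (τ : ∀ i : ℕ+, Fin (2 ^ (i : ℕ))) :
    psi N (⋂ i ∈ I, Sset i (τ i)) ≤ (2 : ℝ) ^ (-(k : ℝ)) := by
  classical
  set X : Set T := ⋂ i ∈ I, Sset i (τ i) with hX
  have hw : (2 : ℝ) ^ (-(k : ℝ)) * ((N k : ℝ) / (I.card : ℝ)) ^ alphaSeq k
      = (2 : ℝ) ^ (-(k : ℝ)) := by
    rw [hI, div_self (by exact_mod_cast Nat.one_le_iff_ne_zero.mp hNk), Real.one_rpow, mul_one]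
  set w : ℝ := (2 : ℝ) ^ (-(k : ℝ)) * ((N k : ℝ) / (I.card : ℝ)) ^ alphaSeq k with hwdef
  have hmem : w ∈ { r | ∃ F : Finset (Set T × ℝ), ↑F ⊆ forgetMarks (Dclass N) ∧
      X ⊆ ⋃ p ∈ F, p.1 ∧ r = ∑ p ∈ F, p.2 } := by
    refine ⟨{(X, w)}, ?_, ?_, by simp⟩
    · intro p hp
      simp only [Finset.coe_singleton, Set.mem_singleton_iff] at hp
      subst hp
      exact ⟨(X, I, w), ⟨k, hk, I, τ, Finset.card_pos.mp (by omega), by omega, rfl⟩, rfl⟩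
    · intro z hz
      simp only [Finset.mem_singleton, Set.mem_iUnion]
      exact ⟨(X, w), rfl, hz⟩
  have hbdd : BddBelow { r | ∃ F : Finset (Set T × ℝ), ↑F ⊆ forgetMarks (Dclass N) ∧
      X ⊆ ⋃ p ∈ F, p.1 ∧ r = ∑ p ∈ F, p.2 } := by
    refine ⟨0, fun r hr => ?_⟩
    obtain ⟨F, hF, _, rfl⟩ := hr
    exact Finset.sum_nonneg (fun p hp => weight_nonneg (hF hp))
  calc psi N X ≤ w := csInf_le hbdd hmem
    _ = (2 : ℝ) ^ (-(k : ℝ)) := hw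

/-- The embedding `n ↦ n + 2` of `ℕ` into `ℕ+`. -/
def embTwo : ℕ ↪ ℕ+ :=
  ⟨fun n => ⟨n + 2, by omega⟩, by
    intro a b h
    have : a + 2 = b + 2 := congrArg (fun x : ℕ+ => (x : ℕ)) h
    omega⟩

/-- If `N(k) ≥ 2^{k+6} (2^{k+5})^{1/α(k)}` for all `k ≥ 1`, then `ψ` is
pathological: every finitely additive measure on `B` absolutely continuous
with respect to `ψ` vanishes identically. -/
theorem psi_pathological (N : ℕ → ℕ) (hN : NCond N)
    (μ : Set T → ℝ) (hμ : IsMeasureOn MemB μ)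
    (hac : AbsContOn MemB μ (psi N)) :
    ∀ A, MemB A → μ A = 0 := by
  obtain ⟨⟨hzero, hnonneg, hmono, hsubadd⟩, hadd⟩ := hμ
  have hμmeas : IsMeasureOn MemB μ := ⟨⟨hzero, hnonneg, hmono, hsubadd⟩, hadd⟩
  -- the τ's realizing small cells
  have hτ := fun n : ℕ+ => Classical.choose_spec (exists_small_cell hμmeas n)
  set τ : ∀ n : ℕ+, Fin (2 ^ (n : ℕ)) :=
    fun n => Classical.choose (exists_small_cell hμmeas n) with hτdef
  have huniv_nonneg : 0 ≤ μ Set.univ := hnonneg _ memB_univ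
  -- main estimate
  have key : ∀ ε : ℝ, 0 < ε → μ Set.univ ≤ 2 * ε := by
    intro ε hε
    obtain ⟨a, ha, himp⟩ := hac ε hε
    -- choose `k ≥ 1` with `2 ^ (-k) ≤ a`
    obtain ⟨m, hm⟩ := exists_pow_lt_of_lt_one ha (by norm_num : (1 : ℝ) / 2 < 1)
    set k : ℕ := max m 1 with hkdef
    have hk1 : 1 ≤ k := le_max_right m 1
    have hpowk : (2 : ℝ) ^ (-(k : ℝ)) ≤ a := by
      have h1 : (2 : ℝ) ^ (-(k : ℝ)) = ((1 : ℝ) / 2) ^ k := by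
        rw [Real.rpow_neg (by norm_num), Real.rpow_natCast]
        rw [one_div, inv_pow]
      rw [h1]
      calc ((1 : ℝ) / 2) ^ k ≤ ((1 : ℝ) / 2) ^ m :=
            pow_le_pow_of_le_one (by norm_num) (by norm_num) (le_max_left m 1)
        _ ≤ a := hm.le
    -- `N k ≥ 1`
    have hNk1 : 1 ≤ N k := by
      have h := hN k hk1
      have hpos : (0 : ℝ) < 2 ^ (k + 6) * ((2 : ℝ) ^ (k + 5)) ^ (1 / alphaSeq k) :=
        mul_pos (by positivity) (Real.rpow_pos_of_pos (by positivity) _)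
      have : (0 : ℝ) < (N k : ℝ) := lt_of_lt_of_le hpos h
      exact_mod_cast Nat.one_le_iff_ne_zero.mpr (by exact_mod_cast this.ne')
    -- the index set
    set I : Finset ℕ+ := (Finset.range (N k)).map embTwo with hIdef
    have hIcard : I.card = N k := by simp [hIdef]
    set X : Set T := ⋂ i ∈ I, Sset i (τ i) with hXdef
    set U : Set T := ⋃ i ∈ I, cell i (τ i) with hUdef
    have hXU : X = Uᶜ := by
      ext z
      simp only [hXdef, hUdef, Set.mem_iInter, Set.mem_compl_iff, Set.mem_iUnion, not_exists]
      constructor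
      · intro h i hi hz; exact h i hi hz
      · intro h i hi; exact h i hi
    have hUmem : MemB U := memB_biUnion I (fun i => cell i (τ i)) (fun i _ => memB_cell i (τ i))
    have hXmem : MemB X := hXU ▸ memB_compl hUmem
    -- μ X ≤ ε
    have hψ : psi N X ≤ a := le_trans (psi_le_of_card_eq N k hk1 hNk1 I hIcard τ) hpowk
    have hμX : μ X ≤ ε := himp X hXmem hψ
    -- μ U ≤ μ univ / 2
    have hμU : μ U ≤ μ Set.univ / 2 := by
      have h1 : μ U ≤ ∑ i ∈ I, μ (cell i (τ i)) :=
        meas_biUnion_le hμmeas I (fun i => cell i (τ i)) (fun i _ => memB_cell i (τ i))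
      have h2 : ∑ i ∈ I, μ (cell i (τ i)) ≤ ∑ i ∈ I, μ Set.univ / 2 ^ ((i : ℕ+) : ℕ) :=
        Finset.sum_le_sum (fun i _ => hτ i)
      have h3 : ∑ i ∈ I, μ Set.univ / 2 ^ ((i : ℕ+) : ℕ) ≤ μ Set.univ / 2 := by
        rw [hIdef, Finset.sum_map]
        have hemb : ∀ n : ℕ, ((embTwo n : ℕ+) : ℕ) = n + 2 := fun n => rfl
        calc ∑ n ∈ Finset.range (N k), μ Set.univ / 2 ^ ((embTwo n : ℕ+) : ℕ)
            = ∑ n ∈ Finset.range (N k), μ Set.univ * (1 / 4) * ((1 : ℝ) / 2) ^ n := by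
              refine Finset.sum_congr rfl (fun n _ => ?_)
              rw [hemb n, pow_add, div_eq_mul_inv, mul_inv]
              have hinv : ((1 : ℝ) / 2) ^ n = ((2 : ℝ) ^ n)⁻¹ := by
                rw [one_div, inv_pow]
              rw [hinv]; ring
          _ = μ Set.univ * (1 / 4) * ∑ n ∈ Finset.range (N k), ((1 : ℝ) / 2) ^ n := by
              rw [Finset.mul_sum]
          _ ≤ μ Set.univ * (1 / 4) * 2 := by
              have := sum_geometric_two_le (N k)
              have hnn : (0 : ℝ) ≤ μ Set.univ * (1 / 4) := by positivity
              exact mul_le_mul_of_nonneg_left this hnn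
          _ = μ Set.univ / 2 := by ring
      linarith
    -- combine
    have hcover : Set.univ = X ∪ U := by
      rw [hXU]; exact (Set.compl_union_self U).symm
    have hfin : μ Set.univ ≤ μ X + μ U := by
      calc μ Set.univ = μ (X ∪ U) := by rw [← hcover]
        _ ≤ μ X + μ U := hsubadd X U hXmem hUmem
    linarith
  -- conclude μ univ = 0
  have huniv : μ Set.univ = 0 := by
    by_contra h
    have hpos : 0 < μ Set.univ := lt_of_le_of_ne huniv_nonneg (Ne.symm h)
    have := key (μ Set.univ / 4) (by linarith)
    linarith
  intro A hA
  have h1 : 0 ≤ μ A := hnonneg A hA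
  have h2 : μ A ≤ μ Set.univ := hmono A Set.univ hA memB_univ (Set.subset_univ A)
  linarith

end Maharam
end

section
/- Let φ be a submeasure on B, let I ⊆ ℕ* be finite, and let X ⊆ T be (I,φ)-thin. Let m_0 < n_0 be positive integers, set I' = I ∩ {m_0+1, ..., n_0}, and let A ∈ A_{m_0}. Then the set X' = (π_A^{-1}(X))_{n_0} is (I',φ)-thin. -/
/-!
Thinness of `X` between ranks `m < n` inside the sub-atom `A' = atom m σ` of `A = atom m₀ τ` is
witnessed, for `X' = (π_A⁻¹ X)_{n₀}`, by `C' = π_A⁻¹ C ∩ A'`, where `C` witnesses the thinness of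
`X` in the atom `π_A A'`. Since `π_A ∘ π_{A'} = π_{π_A A'}` when `m₀ ≤ m`, the sets `π_{A'}⁻¹ C'`
and `π_{π_A A'}⁻¹ C` coincide, so `C'` is as large as `C`; and `C'` misses `X'` because it is
`B_n`-measurable with `n ≤ n₀`, so it cannot meet the `B_{n₀}`-hull of a set it misses.
-/

open Filter Topology

namespace Maharam

/-- The map `π_A : T → A` for the atom `A` of rank `m` prescribed by `τ`:
it replaces the first `m` coordinates of `z` by those of `τ`. -/
def piA (m : ℕ) (τ : ∀ i : ℕ+, Fin (2 ^ (i : ℕ))) (z : T) : T :=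
  fun i => if (i : ℕ) ≤ m then τ i else z i

/-- `X` is `(m,n,φ)`-thin: for every atom `A` of rank `m` (prescribed by `τ`)
there is `C ∈ B_n`, `C ⊆ A`, `C ∩ X = ∅`, with `φ(π_A⁻¹(C)) ≥ 1`. -/
def MNPhiThin (φ : Set T → ℝ) (m n : ℕ) (X : Set T) : Prop :=
  ∀ τ : ∀ i : ℕ+, Fin (2 ^ (i : ℕ)),
    ∃ C : Set T, MemBn n C ∧ C ⊆ atom m τ ∧ C ∩ X = ∅ ∧ 1 ≤ φ (piA m τ ⁻¹' C)

/-- `X` is `(I,φ)`-thin: `(m,n,φ)`-thin for all `m < n` in `I`. -/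
def IPhiThin (φ : Set T → ℝ) (I : Finset ℕ+) (X : Set T) : Prop :=
  ∀ m ∈ I, ∀ n ∈ I, (m : ℕ) < (n : ℕ) → MNPhiThin φ (m : ℕ) (n : ℕ) X

variable {m n : ℕ} {τ σ : T} {C X : Set T}

lemma piA_apply_of_le {i : ℕ+} (hi : (i : ℕ) ≤ m) (z : T) : piA m τ z i = τ i :=
  if_pos hi

lemma piA_apply_of_lt {i : ℕ+} (hi : m < (i : ℕ)) (z : T) : piA m τ z i = z i :=
  if_neg hi.not_ge

lemma piA_mem_atom (z : T) : piA m τ z ∈ atom m τ :=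
  fun _ hi => piA_apply_of_le hi z

lemma piA_piA_of_le {m₀ : ℕ} (h : m₀ ≤ m) (z : T) :
    piA m₀ τ (piA m σ z) = piA m (piA m₀ τ σ) z := by
  funext i
  unfold piA
  by_cases hi₀ : (i : ℕ) ≤ m₀
  · simp [hi₀, hi₀.trans h]
  · by_cases hi : (i : ℕ) ≤ m <;> simp [hi₀, hi]

lemma memBn_atom (h : m ≤ n) : MemBn n (atom m σ) :=
  fun _ _ hzz' hz i hi => (hzz' i (hi.trans h)).symm.trans (hz i hi)

lemma MemBn.inter {D : Set T} (hC : MemBn n C) (hD : MemBn n D) : MemBn n (C ∩ D) :=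
  fun z z' hzz' hz => ⟨hC z z' hzz' hz.1, hD z z' hzz' hz.2⟩

lemma MemBn.preimage_piA (hC : MemBn n C) : MemBn n (piA m τ ⁻¹' C) := by
  refine fun z z' hzz' hz => hC _ _ (fun i hi => ?_) hz
  rcases le_or_gt (i : ℕ) m with him | hmi
  · rw [piA_apply_of_le him, piA_apply_of_le him]
  · rw [piA_apply_of_lt hmi, piA_apply_of_lt hmi, hzz' i hi]

lemma MemBn.inter_projSet_eq_empty {n₀ : ℕ} (hC : MemBn n C) (hn : n ≤ n₀) (hCX : C ∩ X = ∅) :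
    C ∩ projSet n₀ X = ∅ := by
  refine Set.eq_empty_of_forall_notMem fun z ⟨hzC, z', hz'X, hzz'⟩ => ?_
  have hz'C : z' ∈ C := hC z z' (fun i hi => hzz' i (hi.trans hn)) hzC
  exact hCX.subset ⟨hz'C, hz'X⟩

lemma preimage_piA_inter_atom {m₀ : ℕ} (h : m₀ ≤ m) :
    piA m σ ⁻¹' (piA m₀ τ ⁻¹' C ∩ atom m σ) = piA m (piA m₀ τ σ) ⁻¹' C := by
  ext z
  simp [piA_piA_of_le h, piA_mem_atom]

lemma MNPhiThin.projSet_preimage_piA {φ : Set T → ℝ} {m₀ n₀ : ℕ} (hX : MNPhiThin φ m n X)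
    (hm₀ : m₀ ≤ m) (hmn : m ≤ n) (hn₀ : n ≤ n₀) :
    MNPhiThin φ m n (projSet n₀ (piA m₀ τ ⁻¹' X)) := by
  intro σ
  obtain ⟨C, hCn, -, hCX, hCφ⟩ := hX (piA m₀ τ σ)
  refine ⟨piA m₀ τ ⁻¹' C ∩ atom m σ, hCn.preimage_piA.inter (memBn_atom hmn),
    Set.inter_subset_right, ?_, ?_⟩
  · have hC'X : piA m₀ τ ⁻¹' C ∩ piA m₀ τ ⁻¹' X = ∅ := by
      rw [← Set.preimage_inter, hCX, Set.preimage_empty]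
    exact Set.subset_eq_empty (Set.inter_subset_inter_left _ Set.inter_subset_left)
      (hCn.preimage_piA.inter_projSet_eq_empty hn₀ hC'X)
  · rwa [preimage_piA_inter_atom hm₀]

theorem thin_transfer_general (φ : Set T → ℝ)
    (I : Finset ℕ+) (X : Set T) (hX : IPhiThin φ I X)
    (m₀ n₀ : ℕ)
    (τ : ∀ i : ℕ+, Fin (2 ^ (i : ℕ))) :
    IPhiThin φ (I.filter fun i => m₀ < (i : ℕ) ∧ (i : ℕ) ≤ n₀)
      (projSet n₀ (piA m₀ τ ⁻¹' X)) := by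
  intro m hm n hn hmn
  simp only [Finset.mem_filter] at hm hn
  exact (hX m hm.1 n hn.1 hmn).projSet_preimage_piA hm.2.1.le hmn.le hn.2.2

/-- If `X` is `(I,φ)`-thin for a submeasure `φ` on `B`, `m₀ < n₀`,
`I' = I ∩ ]m₀, n₀]`, and `A` is the atom of rank `m₀` prescribed by `τ`, then
`X' = (π_A⁻¹(X))_{n₀}` is `(I',φ)`-thin. -/
theorem thin_transfer (φ : Set T → ℝ) (hφ : IsSubmeasureOn MemB φ)
    (I : Finset ℕ+) (X : Set T) (hX : IPhiThin φ I X)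
    (m₀ n₀ : ℕ) (hm₀ : 0 < m₀) (hmn : m₀ < n₀)
    (τ : ∀ i : ℕ+, Fin (2 ^ (i : ℕ))) :
    IPhiThin φ (I.filter fun i => m₀ < (i : ℕ) ∧ (i : ℕ) ≤ n₀)
      (projSet n₀ (piA m₀ τ ⁻¹' X)) :=
  thin_transfer_general φ I X hX m₀ n₀ τ

end Maharam
end

section
/- Let B be a σ-complete Boolean algebra and ν a continuous submeasure on B. Let A ∈ B and for each n ≥ 1 let C_n be a countable subset of B such that A is below the least upper bound of C_n. Then for each η > 0 there exists A' ∈ B with A' ≤ A and ν(A \ A') ≤ η such that for each n, A' is finitely covered by C_n, i.e., A' ≤ c_1 ∪ ... ∪ c_k for some finite subset {c_1,...,c_k} of C_n. -/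
/-!
Enumerate `C n` as `c₀, c₁, …`. The remainders `A \ (c₀ ⊔ ⋯ ⊔ c_k)` decrease to `⊥`, so by
continuity one of them, `Rₙ`, has `ν Rₙ < η / 2ⁿ⁺¹`. Removing `S = ⨆ₙ Rₙ` from `A` leaves an
element finitely covered by every `C n`, and `ν S ≤ ∑ₙ η / 2ⁿ⁺¹ = η` because a continuous
submeasure is countably subadditive: `ν S ≤ ν (R₀ ⊔ ⋯ ⊔ R_m) + ν (S \ (R₀ ⊔ ⋯ ⊔ R_m))`, and
the second term tends to `0`.
-/

open Filter Topology

namespace Maharam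

variable {B : Type*} [BooleanAlgebra B]

/-- `B` is σ-complete: every countable subset has a least upper bound. -/
def SigmaComplete (B : Type*) [BooleanAlgebra B] : Prop :=
  ∀ s : Set B, s.Countable → ∃ a, IsLUB s a

/-- `ν` is a submeasure on the Boolean algebra `B`. -/
def BASubmeasure (ν : B → ℝ) : Prop :=
  ν ⊥ = 0 ∧ (∀ a, 0 ≤ ν a) ∧ (∀ a b : B, a ≤ b → ν a ≤ ν b) ∧
    ∀ a b : B, ν (a ⊔ b) ≤ ν a + ν b

/-- `ν` is continuous: `ν (A n) → 0` for every decreasing sequence with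
greatest lower bound `⊥`. -/
def BAContinuous (ν : B → ℝ) : Prop :=
  ∀ A : ℕ → B, Antitone A → IsGLB (Set.range A) ⊥ →
    Tendsto (fun n => ν (A n)) atTop (𝓝 0)

theorem antitone_sdiff_partialSups (f : ℕ → B) (x : B) :
    Antitone fun k => x \ partialSups f k :=
  fun _ _ hij => sdiff_le_sdiff_left ((partialSups f).monotone hij)

theorem isGLB_range_sdiff_partialSups {f : ℕ → B} {b x : B} (hf : IsLUB (Set.range f) b)
    (hx : x ≤ b) : IsGLB (Set.range fun k => x \ partialSups f k) ⊥ := by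
  refine ⟨fun _ _ => bot_le, fun y hy => ?_⟩
  have hyx : y ≤ x := (hy ⟨0, rfl⟩).trans sdiff_le
  have hb : b ≤ yᶜ := hf.2 <| Set.forall_mem_range.2 fun k =>
    (disjoint_sdiff_self_left.mono (hy ⟨k, rfl⟩) (le_partialSups f k)).symm.le_compl_right
  exact (le_compl_self.1 (hyx.trans (hx.trans hb))).le

section Submeasure

variable {ν : B → ℝ}

theorem BASubmeasure.map_bot (hsub : BASubmeasure ν) : ν ⊥ = 0 := hsub.1

theorem BASubmeasure.nonneg (hsub : BASubmeasure ν) (a : B) : 0 ≤ ν a := hsub.2.1 a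

theorem BASubmeasure.mono (hsub : BASubmeasure ν) {a b : B} (hab : a ≤ b) : ν a ≤ ν b :=
  hsub.2.2.1 a b hab

theorem BASubmeasure.sup_le (hsub : BASubmeasure ν) (a b : B) : ν (a ⊔ b) ≤ ν a + ν b :=
  hsub.2.2.2 a b

theorem BASubmeasure.finset_sup_le {ι : Type*} (hsub : BASubmeasure ν) (g : ι → B)
    (s : Finset ι) : ν (s.sup g) ≤ ∑ i ∈ s, ν (g i) := by
  classical
  induction s using Finset.cons_induction with
  | empty => simp [hsub.map_bot]
  | cons a s _ ih =>
    rw [Finset.sup_cons, Finset.sum_cons]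
    exact (hsub.sup_le _ _).trans (add_le_add_right ih _)

theorem BAContinuous.tendsto_sdiff_partialSups (hcont : BAContinuous ν) {f : ℕ → B}
    {b x : B} (hf : IsLUB (Set.range f) b) (hx : x ≤ b) :
    Tendsto (fun k => ν (x \ partialSups f k)) atTop (𝓝 0) :=
  hcont _ (antitone_sdiff_partialSups f x) (isGLB_range_sdiff_partialSups hf hx)

/-- Countable subadditivity of a continuous submeasure. -/
theorem BASubmeasure.le_tsum_of_isLUB (hsub : BASubmeasure ν) (hcont : BAContinuous ν)
    {g : ℕ → B} {S : B} (hS : IsLUB (Set.range g) S) {ε : ℕ → ℝ} (hε : Summable ε)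
    (hgε : ∀ i, ν (g i) ≤ ε i) : ν S ≤ ∑' i, ε i := by
  have hpartial : ∀ m, ν (partialSups g m) ≤ ∑' i, ε i := fun m =>
    calc ν (partialSups g m) ≤ ∑ i ∈ Finset.range (m + 1), ν (g i) := by
          rw [partialSups_eq_sup_range]; exact hsub.finset_sup_le g _
      _ ≤ ∑ i ∈ Finset.range (m + 1), ε i := Finset.sum_le_sum fun i _ => hgε i
      _ ≤ ∑' i, ε i := hε.sum_le_tsum _ fun i _ => (hsub.nonneg _).trans (hgε i)
  have hsplit : ∀ m, ν S ≤ ν (S \ partialSups g m) + ∑' i, ε i := fun m =>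
    calc ν S = ν (S \ partialSups g m ⊔ partialSups g m) := by
          rw [sdiff_sup_cancel (partialSups_le_iff.2 fun j _ => hS.1 ⟨j, rfl⟩)]
      _ ≤ ν (S \ partialSups g m) + ν (partialSups g m) := hsub.sup_le _ _
      _ ≤ ν (S \ partialSups g m) + ∑' i, ε i := add_le_add_right (hpartial m) _
  have hlim := (hcont.tendsto_sdiff_partialSups hS le_rfl).add_const (∑' i, ε i)
  rw [zero_add] at hlim
  exact ge_of_tendsto' hlim hsplit

theorem BAContinuous.exists_finset_sdiff_lt (hsub : BASubmeasure ν) (hcont : BAContinuous ν)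
    {C : Set B} (hC : C.Countable) {b x : B} (hCb : IsLUB C b) (hx : x ≤ b) {ε : ℝ}
    (hε : 0 < ε) : ∃ t : Finset B, ↑t ⊆ C ∧ ν (x \ t.sup id) < ε := by
  classical
  rcases C.eq_empty_or_nonempty with rfl | hne
  · have hx : x = ⊥ := le_bot_iff.1 (hx.trans (hCb.unique isLUB_empty).le)
    exact ⟨∅, by simp, by simpa [hx, hsub.map_bot] using hε⟩
  obtain ⟨f, rfl⟩ := hC.exists_eq_range hne
  obtain ⟨k, hk⟩ := ((hcont.tendsto_sdiff_partialSups hCb hx).eventually_lt_const hε).exists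
  refine ⟨(Finset.range (k + 1)).image f, by simp, ?_⟩
  rwa [Finset.sup_image, Function.id_comp, ← partialSups_eq_sup_range]

end Submeasure

/-- If `ν` is a continuous submeasure on a σ-complete Boolean algebra, `A ∈ B`
and `(C_n)` are countable subsets of `B` with `A` below the least upper bound
of each `C_n`, then for every `η > 0` there is `A' ≤ A` with `ν (A \ A') ≤ η`
such that each `A'` is finitely covered by every `C_n`. -/
theorem exists_finitely_covered_approximation
    (hσ : SigmaComplete B) (ν : B → ℝ)
    (hsub : BASubmeasure ν) (hcont : BAContinuous ν)
    (A : B) (C : ℕ → Set B) (hcnt : ∀ n, (C n).Countable)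
    (hcov : ∀ n, ∃ b, IsLUB (C n) b ∧ A ≤ b)
    (η : ℝ) (hη : 0 < η) :
    ∃ A' : B, A' ≤ A ∧ ν (A \ A') ≤ η ∧
      ∀ n, ∃ t : Finset B, ↑t ⊆ C n ∧ A' ≤ t.sup id := by
  have hcover : ∀ n, ∃ t : Finset B, ↑t ⊆ C n ∧ ν (A \ t.sup id) < η / 2 / 2 ^ n := fun n =>
    let ⟨_, hb, hAb⟩ := hcov n
    hcont.exists_finset_sdiff_lt hsub (hcnt n) hb hAb (by positivity)
  choose t htC htν using hcover
  obtain ⟨S, hS⟩ := hσ _ (Set.countable_range fun n => A \ (t n).sup id)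
  refine ⟨A \ S, sdiff_le, ?_, fun n => ⟨t n, htC n, ?_⟩⟩
  · calc ν (A \ (A \ S)) ≤ ν S := hsub.mono (sdiff_sdiff_right_self.trans_le inf_le_right)
      _ ≤ ∑' n, η / 2 / 2 ^ n :=
        hsub.le_tsum_of_isLUB hcont hS (summable_geometric_two' η) fun n => (htν n).le
      _ = η := tsum_geometric_two' η
  · calc A \ S ≤ A \ (A \ (t n).sup id) := sdiff_le_sdiff_left (hS.1 ⟨n, rfl⟩)
      _ ≤ (t n).sup id := sdiff_sdiff_right_self.trans_le inf_le_right

end Maharam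
end
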